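/- Let C be an X-neighbour transitive code in H(m,q) with minimum distance δ ≥ 3, and suppose J ⊆ {1,…,m} is a block of an X-invariant partition of the coordinate set. If ν(α,j,b) and ν(β,i,c) are neighbours of C with j, i ∈ J (α, β ∈ C, b ≠ α_j, c ≠ β_i), then there exists x = hσ ∈ X with j^σ = i mapping ν(α,j,b) to ν(β,i,c); consequently the stabiliser X_J acts transitively on C_1(J). -/
import Mathlib


/-- Distance from a vertex to a code. -/
noncomputable def distToCode {ι Q : Type*} [Fintype ι] [DecidableEq Q]
    (ν : ι → Q) (C : Set (ι → Q)) : ℕ :=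
  sInf {d | ∃ β ∈ C, d = hammingDist ν β}

/-- The automorphism of `H(m,q)` determined by `h ∈ Sym(Q)^m`, `σ ∈ Sym(Fin m)`. -/
def hammAut {m : ℕ} {Q : Type*} (h : Fin m → Equiv.Perm Q) (σ : Equiv.Perm (Fin m)) :
    Equiv.Perm (Fin m → Q) :=
  (Equiv.piCongrRight h).trans (Equiv.arrowCongr σ (Equiv.refl Q))

/-- `C` is `X`-neighbour transitive: `X` consists of Hamming graph automorphisms,
stabilises `C` setwise, and acts transitively on `C` and on the neighbour set `C₁`. -/
def NbrTrans {m : ℕ} {Q : Type*} [DecidableEq Q]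
    (X : Subgroup (Equiv.Perm (Fin m → Q))) (C : Set (Fin m → Q)) : Prop :=
  (∀ x ∈ X, ∃ h σ, x = hammAut h σ) ∧
  (∀ x ∈ X, (⇑x) '' C = C) ∧
  (∀ α ∈ C, ∀ β ∈ C, ∃ x ∈ X, x α = β) ∧
  (∀ ν₁ ν₂ : Fin m → Q, distToCode ν₁ C = 1 → distToCode ν₂ C = 1 →
    ∃ x ∈ X, x ν₁ = ν₂)

/-- Projection of a vertex of `H(m,q)` onto the coordinates in `J`. -/
def proj {m : ℕ} {Q : Type*} (J : Finset (Fin m)) (α : Fin m → Q) : J → Q :=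
  fun j => α j


set_option linter.unusedSectionVars false

lemma hammAut_apply {m : ℕ} {Q : Type*} (h : Fin m → Equiv.Perm Q) (σ : Equiv.Perm (Fin m))
    (γ : Fin m → Q) (k : Fin m) :
    hammAut h σ γ k = h (σ.symm k) (γ (σ.symm k)) := rfl

lemma dist_hammAut {m : ℕ} {Q : Type*} [DecidableEq Q] (h : Fin m → Equiv.Perm Q)
    (σ : Equiv.Perm (Fin m)) (γ γ' : Fin m → Q) :
    hammingDist (hammAut h σ γ) (hammAut h σ γ') = hammingDist γ γ' := by
  unfold hammingDist
  apply Finset.card_bij (fun k _ => σ.symm k)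
  · intro k hk
    simp only [Finset.mem_filter, Finset.mem_univ, true_and] at hk ⊢
    simp only [hammAut_apply] at hk
    exact fun e => hk (by rw [e])
  · intro k₁ _ k₂ _ e; exact σ.symm.injective e
  · intro k hk
    refine ⟨σ k, ?_, by simp⟩
    simp only [Finset.mem_filter, Finset.mem_univ, true_and] at hk ⊢
    simpa [hammAut_apply] using fun e => hk ((h (σ.symm (σ k))).injective (by simpa using e))

lemma dist_update {m : ℕ} {Q : Type*} [DecidableEq Q] {α : Fin m → Q} {j : Fin m} {b : Q}
    (hb : b ≠ α j) : hammingDist (Function.update α j b) α = 1 := by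
  unfold hammingDist
  rw [show (Finset.univ.filter fun k => Function.update α j b k ≠ α k) = {j} from ?_]
  · simp
  · ext k
    simp only [Finset.mem_filter, Finset.mem_univ, true_and, Finset.mem_singleton]
    constructor
    · intro hk; by_contra hkj; exact hk (by rw [Function.update_of_ne hkj])
    · rintro rfl; simpa using hb

/-- Let `C` be `X`-neighbour transitive with minimum distance `δ ≥ 3` and let `J` be a block
of an `X`-invariant partition `𝒥` of the coordinates.  Any two neighbours `ν(α,j,b)`,
`ν(β,i,c)` of `C` with `j, i ∈ J` are related by some `hσ ∈ X` with `j^σ = i`; hence the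
stabiliser `X_J` is transitive on `C₁(J)`. -/
theorem stmt_8 {m : ℕ} {Q : Type*} [DecidableEq Q]
    (X : Subgroup (Equiv.Perm (Fin m → Q))) (C : Set (Fin m → Q))
    (hNT : NbrTrans X C) (δ : ℕ) (hδ3 : 3 ≤ δ)
    (hδ : ∀ α ∈ C, ∀ β ∈ C, α ≠ β → δ ≤ hammingDist α β)
    (𝒥 : Finset (Finset (Fin m)))
    (hpart : ∀ k : Fin m, ∃! J', J' ∈ 𝒥 ∧ k ∈ J')
    (hinv : ∀ (h : Fin m → Equiv.Perm Q) (σ : Equiv.Perm (Fin m)),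
      hammAut h σ ∈ X → ∀ J' ∈ 𝒥, J'.image σ ∈ 𝒥)
    (J : Finset (Fin m)) (hJ : J ∈ 𝒥)
    (α β : Fin m → Q) (hα : α ∈ C) (hβ : β ∈ C)
    (j i : Fin m) (hj : j ∈ J) (hi : i ∈ J)
    (b c : Q) (hb : b ≠ α j) (hc : c ≠ β i)
    (hbn : distToCode (Function.update α j b) C = 1)
    (hcn : distToCode (Function.update β i c) C = 1) :
    ∃ (h : Fin m → Equiv.Perm Q) (σ : Equiv.Perm (Fin m)),
      hammAut h σ ∈ X ∧ σ j = i ∧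
      hammAut h σ (Function.update α j b) = Function.update β i c := by
  obtain ⟨hC1, hC2, hC3, hC4⟩ := hNT
  obtain ⟨x, hxX, hxν⟩ := hC4 _ _ hbn hcn
  obtain ⟨h, σ, rfl⟩ := hC1 x hxX
  set ν₁ := Function.update α j b
  set ν₂ := Function.update β i c
  have hxαC : hammAut h σ α ∈ C := by
    rw [← hC2 _ hxX]; exact ⟨α, hα, rfl⟩
  have hd1 : hammingDist ν₂ (hammAut h σ α) = 1 := by
    rw [← hxν, dist_hammAut]; exact dist_update hb
  have hd2 : hammingDist ν₂ β = 1 := dist_update hc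
  have hxαβ : hammAut h σ α = β := by
    by_contra hne
    have h3 : δ ≤ hammingDist (hammAut h σ α) β := hδ _ hxαC _ hβ hne
    have := hammingDist_triangle (hammAut h σ α) ν₂ β
    rw [hammingDist_comm (hammAut h σ α) ν₂, hd1, hd2] at this
    omega
  have hσji : σ j = i := by
    by_contra hne
    have e1 : hammAut h σ ν₁ (σ j) = h j (ν₁ j) := by
      rw [hammAut_apply]; simp
    have e2 : hammAut h σ α (σ j) = h j (α j) := by
      rw [hammAut_apply]; simp
    rw [hxν] at e1
    rw [hxαβ] at e2
    have : ν₂ (σ j) = β (σ j) := Function.update_of_ne hne c β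
    rw [e1, e2] at this
    exact hb (by simpa [ν₁] using (h j).injective this)
  exact ⟨h, σ, hxX, hσji, hxν⟩
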